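/- arXiv:0903.1785 — 12 statements merged into one kernel-verified Lean document; each statement's English description precedes it below -/
import Mathlib

section
/- Let S be a semigroup and a, d, b ∈ S. If b satisfies bad = d = dab and b ∈ dS ∩ Sd, then b is an outer inverse of a (i.e., bab = b) and b is H-related to d (i.e., b and d generate the same principal left ideal and the same principal right ideal). -/
variable {S : Type*} [Semigroup S]

/-- `x` is below `y` in the L-preorder: `x ∈ S¹y`. -/
def lle (x y : S) : Prop := x = y ∨ ∃ s, x = s * y
/-- `x` is below `y` in the R-preorder: `x ∈ yS¹`. -/
def rle (x y : S) : Prop := x = y ∨ ∃ s, x = y * s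
/-- Green's L relation: `S¹x = S¹y`. -/
def lrel (x y : S) : Prop := lle x y ∧ lle y x
/-- Green's R relation: `xS¹ = yS¹`. -/
def rrel (x y : S) : Prop := rle x y ∧ rle y x
/-- Green's H relation. -/
def hrel (x y : S) : Prop := lrel x y ∧ rrel x y
/-- `b` is an inverse of `a` along `d`. -/
def invAlong (a d b : S) : Prop :=
  b * a * d = d ∧ d * a * b = d ∧ (∃ s, b = d * s) ∧ (∃ t, b = t * d)
/-- The H-class of `x`. -/
def hClass (x : S) : Set S := {y | hrel y x}
/-- A subset of `S` is a group under the restricted multiplication. -/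
def isGroupSet (H : Set S) : Prop :=
  (∀ x ∈ H, ∀ y ∈ H, x * y ∈ H) ∧
  ∃ e ∈ H, (∀ x ∈ H, e * x = x ∧ x * e = x) ∧ ∀ x ∈ H, ∃ y ∈ H, x * y = e ∧ y * x = e

theorem lle_of_eq_mul {x y s : S} (h : x = s * y) : lle x y := Or.inr ⟨s, h⟩

theorem rle_of_eq_mul {x y s : S} (h : x = y * s) : rle x y := Or.inr ⟨s, h⟩

theorem mul_mul_self_of_mul_mul_eq {a d b s : S} (hd : b * a * d = d) (hb : b = d * s) :
    b * a * b = b :=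
  calc b * a * b = b * a * d * s := by rw [mul_assoc (b * a) d s, ← hb]
    _ = b := by rw [hd, ← hb]

theorem stmt0 (a d b : S) (h1 : b * a * d = d) (h2 : d * a * b = d)
    (h3 : ∃ s, b = d * s) (h4 : ∃ t, b = t * d) :
    b * a * b = b ∧ hrel b d := by
  obtain ⟨s, hs⟩ := h3
  obtain ⟨t, ht⟩ := h4
  have hdb : d = b * (a * d) := by rw [← mul_assoc, h1]
  exact ⟨mul_mul_self_of_mul_mul_eq h1 hs,
    ⟨lle_of_eq_mul ht, lle_of_eq_mul h2.symm⟩, ⟨rle_of_eq_mul hs, rle_of_eq_mul hdb⟩⟩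
end

section
/- Let S be a semigroup and a, d, b ∈ S. If b is an outer inverse of a (bab = b) and b is H-related to d, then ba is an idempotent in the R-class of d and b is both an inner and outer inverse of a(ba), i.e., (aba)b(aba) = aba and b(aba)b = b. -/
variable {S : Type*} [Semigroup S]

/-! Everything follows from the idempotence of `b * a`, which is `(b * a * b) * a = b * a`: both
identities for `a * b * a` are words in `b * a`, and `b = (b * a) * b` gives `b ∈ (b * a) S¹`. -/

theorem rle.trans {x y z : S} (hxy : rle x y) (hyz : rle y z) : rle x z := by
  rcases hxy with rfl | ⟨s, rfl⟩
  · exact hyz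
  rcases hyz with rfl | ⟨t, rfl⟩
  · exact Or.inr ⟨s, rfl⟩
  · exact Or.inr ⟨t * s, mul_assoc _ _ _⟩

theorem rrel.trans {x y z : S} (hxy : rrel x y) (hyz : rrel y z) : rrel x z :=
  ⟨hxy.1.trans hyz.1, hyz.2.trans hxy.2⟩

def IsInnerInverse (a b : S) : Prop := a * b * a = a

def IsOuterInverse (a b : S) : Prop := b * a * b = b

namespace IsOuterInverse

variable {a b : S}

theorem isIdempotentElem_mul (h : IsOuterInverse a b) : IsIdempotentElem (b * a) := by
  rw [IsIdempotentElem, ← mul_assoc, h]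

theorem rrel_mul (h : IsOuterInverse a b) : rrel (b * a) b :=
  ⟨Or.inr ⟨a, rfl⟩, Or.inr ⟨b, h.symm⟩⟩

theorem isInnerInverse_mul_mul (h : IsOuterInverse a b) : IsInnerInverse (a * b * a) b :=
  calc a * b * a * b * (a * b * a) = a * (b * a * (b * a) * (b * a)) := by simp only [mul_assoc]
    _ = a * b * a := by rw [h.isIdempotentElem_mul.eq, h.isIdempotentElem_mul.eq, ← mul_assoc]

theorem mul_mul (h : IsOuterInverse a b) : IsOuterInverse (a * b * a) b :=
  calc b * (a * b * a) * b = b * a * (b * a) * b := by simp only [mul_assoc]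
    _ = b := by rw [h.isIdempotentElem_mul.eq, h]

end IsOuterInverse

theorem stmt1 (a d b : S) (h1 : b * a * b = b) (h2 : hrel b d) :
    (b * a) * (b * a) = b * a ∧ rrel (b * a) d ∧
    (a * b * a) * b * (a * b * a) = a * b * a ∧ b * (a * b * a) * b = b := by
  have hb : IsOuterInverse a b := h1
  exact ⟨hb.isIdempotentElem_mul, hb.rrel_mul.trans h2.2, hb.isInnerInverse_mul_mul, hb.mul_mul⟩
end

section
/- Let S be a semigroup and a, d, b ∈ S. Suppose there is an idempotent f in the L-class of d such that b is both an inner and outer inverse of fa, and b H d. Then bad = d = dab and b ∈ dS ∩ Sd. -/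
variable {S : Type*} [Semigroup S]

/-! Because `d ∈ S¹f` and `b ∈ S¹d` with `f` idempotent, `bf = b`, so `b(fa)b = b` reads `bab = b`.
Since `b` and `d` generate the same principal left and right ideals, the identities
`(ba)b = b` and `b(ab) = b` transfer from `b` to `d`. -/

theorem lle.mul_eq_self {x y e : S} (h : lle x y) (hy : y * e = y) : x * e = x := by
  rcases h with rfl | ⟨s, rfl⟩
  · exact hy
  · rw [mul_assoc, hy]

theorem rle.mul_eq_self {x y e : S} (h : rle x y) (hy : e * y = y) : e * x = x := by
  rcases h with rfl | ⟨s, rfl⟩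
  · exact hy
  · rw [← mul_assoc, hy]

theorem lle.exists_eq_mul {x y e : S} (h : lle x y) (hy : e * y = y) : ∃ t, x = t * y := by
  rcases h with rfl | ⟨s, rfl⟩
  · exact ⟨e, hy.symm⟩
  · exact ⟨s, rfl⟩

theorem rle.exists_eq_mul {x y e : S} (h : rle x y) (hy : y * e = y) : ∃ t, x = y * t := by
  rcases h with rfl | ⟨s, rfl⟩
  · exact ⟨e, hy.symm⟩
  · exact ⟨s, rfl⟩

theorem stmt3_general (a d b f : S) (hf : f * f = f) (hfd : lrel f d)
    (ho : b * (f * a) * b = b) (hbd : hrel b d) :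
    b * a * d = d ∧ d * a * b = d ∧ (∃ s, b = d * s) ∧ (∃ t, b = t * d) := by
  obtain ⟨⟨hbd_L, hdb_L⟩, ⟨hbd_R, hdb_R⟩⟩ := hbd
  have hdf : d * f = d := hfd.2.mul_eq_self hf
  have hbf : b * f = b := hbd_L.mul_eq_self hdf
  have hbab : b * a * b = b := by
    calc b * a * b = b * f * a * b := by rw [hbf]
      _ = b := by rw [mul_assoc b f a, ho]
  have hbad : b * a * d = d := hdb_R.mul_eq_self hbab
  have hdab : d * (a * b) = d := hdb_L.mul_eq_self (by rw [← mul_assoc, hbab])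
  exact ⟨hbad, by rwa [mul_assoc], hbd_R.exists_eq_mul hdab,
    hbd_L.exists_eq_mul hbad⟩

theorem stmt3 (a d b f : S) (hf : f * f = f) (hfd : lrel f d)
    (hi : (f * a) * b * (f * a) = f * a) (ho : b * (f * a) * b = b) (hbd : hrel b d) :
    b * a * d = d ∧ d * a * b = d ∧ (∃ s, b = d * s) ∧ (∃ t, b = t * d) :=
  stmt3_general a d b f hf hfd ho hbd
end

section
/- Let S be a semigroup and a, d ∈ S. The following are equivalent: (1) there exists b ∈ S with bad = d = dab and b ∈ dS ∩ Sd; (2) there exists b ∈ S with bab = b and b H d. Moreover any b satisfying one condition satisfies the other. -/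
variable {S : Type*} [Semigroup S]

/-!
If `b` is an inverse of `a` along `d`, then `b = d * s` gives `b * a * b = (b * a * d) * s = b`,
and `b * a * d = d = d * a * b` puts `d` in `S * b ∩ b * S`, so `b H d`. Conversely, `b * a * b = b`
makes `b * a` a left identity on `b * S¹` and `a * b` a right identity on `S¹ * b`; both sets
contain `d` when `b H d`.
-/

section

variable {a b d : S}

theorem exists_eq_mul_of_rle (h : rle b d) (hb : b * a * b = b) : ∃ s, b = d * s := by
  rcases h with rfl | hs
  · exact ⟨a * b, by rw [← mul_assoc, hb]⟩
  · exact hs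

theorem exists_eq_mul_of_lle (h : lle b d) (hb : b * a * b = b) : ∃ t, b = t * d := by
  rcases h with rfl | ht
  · exact ⟨b * a, hb.symm⟩
  · exact ht

theorem mul_mul_eq_of_rle (h : rle d b) (hb : b * a * b = b) : b * a * d = d := by
  rcases h with rfl | ⟨u, rfl⟩
  · exact hb
  · rw [← mul_assoc, hb]

theorem mul_mul_eq_of_lle (h : lle d b) (hb : b * a * b = b) : d * a * b = d := by
  rcases h with rfl | ⟨v, rfl⟩
  · exact hb
  · simp only [mul_assoc] at hb ⊢
    rw [hb]

theorem invAlong.mul_mul_self (h : invAlong a d b) : b * a * b = b := by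
  obtain ⟨hbad, -, ⟨s, hs⟩, -⟩ := h
  nth_rewrite 2 [hs]
  rw [← mul_assoc, hbad, hs]

theorem invAlong.hrel (h : invAlong a d b) : hrel b d := by
  obtain ⟨hbad, hdab, ⟨s, hs⟩, ⟨t, ht⟩⟩ := h
  exact ⟨⟨.inr ⟨t, ht⟩, .inr ⟨d * a, hdab.symm⟩⟩,
    ⟨.inr ⟨s, hs⟩, .inr ⟨a * d, by rw [← mul_assoc, hbad]⟩⟩⟩

theorem invAlong_of_hrel (hb : b * a * b = b) (h : hrel b d) : invAlong a d b :=
  ⟨mul_mul_eq_of_rle h.2.2 hb, mul_mul_eq_of_lle h.1.2 hb,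
    exists_eq_mul_of_rle h.2.1 hb, exists_eq_mul_of_lle h.1.1 hb⟩

theorem invAlong_iff : invAlong a d b ↔ b * a * b = b ∧ hrel b d :=
  ⟨fun h => ⟨h.mul_mul_self, h.hrel⟩, fun h => invAlong_of_hrel h.1 h.2⟩

end

theorem stmt4 (a d : S) :
    ((∃ b, invAlong a d b) ↔ (∃ b, b * a * b = b ∧ hrel b d)) ∧
    (∀ b, invAlong a d b ↔ (b * a * b = b ∧ hrel b d)) :=
  ⟨exists_congr fun _ => invAlong_iff, fun _ => invAlong_iff⟩
end

section
/- Let S be a semigroup and a, d ∈ S. If b is an inverse of a along d (i.e., bad = d = dab and b ∈ dS ∩ Sd), then ba is an idempotent in the R-class of d, and ab is an idempotent in the L-class of d. -/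
variable {S : Type*} [Semigroup S]

/-! From `b ∈ Sd` and `dab = d` one gets `bab = b`, which makes `ba` and `ab` idempotent;
the Green relations come from `ba ∈ dS`, `d = (ba)d` and `ab ∈ Sd`, `d = d(ab)`. -/

theorem isIdempotentElem_mul_of_mul_mul_self {x y : S} (h : x * y * x = x) :
    IsIdempotentElem (x * y) := by
  rw [IsIdempotentElem, ← mul_assoc, h]

theorem isIdempotentElem_mul_of_mul_mul_self' {x y : S} (h : x * y * x = x) :
    IsIdempotentElem (y * x) := by
  rw [IsIdempotentElem, mul_assoc, ← mul_assoc x, h]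

theorem rrel_of_eq_mul {x y s t : S} (hx : x = y * s) (hy : y = x * t) : rrel x y :=
  ⟨.inr ⟨s, hx⟩, .inr ⟨t, hy⟩⟩

theorem lrel_of_eq_mul {x y s t : S} (hx : x = s * y) (hy : y = t * x) : lrel x y :=
  ⟨.inr ⟨s, hx⟩, .inr ⟨t, hy⟩⟩

namespace invAlong

variable {a d b : S}

theorem mul_mul_self_s5 (hb : invAlong a d b) : b * a * b = b := by
  obtain ⟨-, hdab, -, t, rfl⟩ := hb
  rw [mul_assoc t d a, mul_assoc t, hdab]

theorem rrel_mul (hb : invAlong a d b) : rrel (b * a) d := by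
  obtain ⟨hbad, -, ⟨s, rfl⟩, -⟩ := hb
  exact rrel_of_eq_mul (mul_assoc d s a) hbad.symm

theorem lrel_mul (hb : invAlong a d b) : lrel (a * b) d := by
  obtain ⟨-, hdab, -, ⟨t, rfl⟩⟩ := hb
  exact lrel_of_eq_mul (mul_assoc a t d).symm (by rw [← mul_assoc, hdab])

end invAlong

theorem stmt5 (a d b : S) (hb : invAlong a d b) :
    (b * a) * (b * a) = b * a ∧ rrel (b * a) d ∧
    (a * b) * (a * b) = a * b ∧ lrel (a * b) d :=
  ⟨isIdempotentElem_mul_of_mul_mul_self hb.mul_mul_self_s5, hb.rrel_mul,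
    isIdempotentElem_mul_of_mul_mul_self' hb.mul_mul_self_s5, hb.lrel_mul⟩
end

section
/- Let S be a semigroup and a, d ∈ S. If b and c are both inverses of a along d (i.e., bad = d = dab, b ∈ dS ∩ Sd, and cad = d = dac, c ∈ dS ∩ Sd), then b = c. -/
variable {S : Type*} [Semigroup S]

-- Both `b` and `c` equal `b * a * c`.
theorem eq_of_mul_mul_eq_of_mul_mul_eq {a d b c : S} (hbad : b * a * d = d)
    (hbd : ∃ t, b = t * d) (hdac : d * a * c = d) (hcd : ∃ s, c = d * s) : b = c := by
  obtain ⟨t, rfl⟩ := hbd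
  obtain ⟨s, rfl⟩ := hcd
  calc t * d = t * (d * a * (d * s)) := by rw [hdac]
    _ = t * d * a * d * s := by simp only [mul_assoc]
    _ = d * s := by rw [hbad]

theorem stmt6 (a d b c : S) (hb : invAlong a d b) (hc : invAlong a d c) : b = c :=
  eq_of_mul_mul_eq_of_mul_mul_eq hb.1 hb.2.2.2 hc.2.1 hc.2.2.1
end

section
/- Let S be a semigroup and a, d ∈ S. Then a has an inner inverse along d (an inverse b of a along d with additionally aba = a) if and only if ad ∈ R_a ∩ L_d and da ∈ R_d ∩ L_a (i.e., ad and da are trace products). -/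
/-!
If `b` is an inner inverse of `a` along `d`, the identities `a = aba`, `d = bad = dab` together
with `b ∈ dS ∩ Sd` exhibit the four Green's relations directly. Conversely, write
`a = ads`, `d = tad`, `d = dau`, `a = vda`; then `b = tau` is the inner inverse, since it equals
both `dsu` and `tvd`.
-/

variable {S : Type*} [Semigroup S]

theorem rrel_mul_iff {x y : S} : rrel (x * y) x ↔ ∃ s, x = x * y * s := by
  refine ⟨fun ⟨_, h⟩ => ?_, fun h => ⟨Or.inr ⟨y, rfl⟩, Or.inr h⟩⟩
  rcases h with h | h
  · exact ⟨y, by rw [← h, ← h]⟩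
  · exact h

theorem lrel_mul_iff {x y : S} : lrel (y * x) x ↔ ∃ t, x = t * (y * x) := by
  refine ⟨fun ⟨_, h⟩ => ?_, fun h => ⟨Or.inr ⟨y, rfl⟩, Or.inr h⟩⟩
  rcases h with h | h
  · exact ⟨y, by rw [← h, ← h]⟩
  · exact h

theorem invAlong_of_factorizations {a d s t u v : S} (hs : a = a * d * s) (ht : d = t * (a * d))
    (hu : d = d * a * u) (hv : a = v * (d * a)) :
    invAlong a d (t * a * u) ∧ a * (t * a * u) * a = a := by
  have hb_left : t * a * u = d * (s * u) :=
    calc t * a * u = t * (a * d * s) * u := by rw [← hs]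
      _ = t * (a * d) * s * u := by simp only [mul_assoc]
      _ = d * (s * u) := by rw [← ht, mul_assoc]
  have hb_right : t * a * u = t * v * d :=
    calc t * a * u = t * (v * (d * a)) * u := by rw [← hv]
      _ = t * v * (d * a * u) := by simp only [mul_assoc]
      _ = t * v * d := by rw [← hu]
  have hbad : t * a * u * a * d = d :=
    calc t * a * u * a * d = t * (v * (d * a)) * d := by rw [hb_right]; simp only [mul_assoc]
      _ = d := by rw [← hv, mul_assoc, ← ht]
  have hdab : d * a * (t * a * u) = d :=
    calc d * a * (t * a * u) = d * (a * d * s) * u := by rw [hb_left]; simp only [mul_assoc]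
      _ = d := by rw [← hs, ← hu]
  refine ⟨⟨hbad, hdab, ⟨s * u, hb_left⟩, ⟨t * v, hb_right⟩⟩, ?_⟩
  calc a * (t * a * u) * a = a * (t * a * u) * (a * d * s) := by rw [← hs]
    _ = a * (t * a * u * a * d) * s := by simp only [mul_assoc]
    _ = a := by rw [hbad, ← hs]

theorem stmt7 (a d : S) :
    (∃ b, invAlong a d b ∧ a * b * a = a) ↔
    (rrel (a * d) a ∧ lrel (a * d) d ∧ rrel (d * a) d ∧ lrel (d * a) a) := by
  constructor
  · rintro ⟨b, ⟨hbad, hdab, ⟨s, hs⟩, ⟨t, ht⟩⟩, haba⟩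
    refine ⟨rrel_mul_iff.2 ⟨s * a, ?_⟩, lrel_mul_iff.2 ⟨b, by rw [← mul_assoc, hbad]⟩,
      rrel_mul_iff.2 ⟨b, hdab.symm⟩, lrel_mul_iff.2 ⟨a * t, ?_⟩⟩
    · exact haba.symm.trans (by rw [hs]; simp only [mul_assoc])
    · exact haba.symm.trans (by rw [ht]; simp only [mul_assoc])
  · rintro ⟨hr₁, hl₁, hr₂, hl₂⟩
    obtain ⟨s, hs⟩ := rrel_mul_iff.1 hr₁
    obtain ⟨t, ht⟩ := lrel_mul_iff.1 hl₁
    obtain ⟨u, hu⟩ := rrel_mul_iff.1 hr₂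
    obtain ⟨v, hv⟩ := lrel_mul_iff.1 hl₂
    exact ⟨_, invAlong_of_factorizations hs ht hu hv⟩
end

section
/- Let S be a semigroup and a, d ∈ S. If da R d and the H-class of da is a group with group inverse operation (da)^♯ for da, then b = (da)^♯ d is the inverse of a along d, i.e., bad = d = dab and b ∈ dS ∩ Sd. -/
variable {S : Type*} [Semigroup S]

/-! Since `d ∈ (da)S¹` and `(da)♯` is an inner inverse of `da`, the idempotent `(da)(da)♯` fixes
`d` from the left; as `(da)♯` commutes with `da`, this gives both `bad = d` and `dab = d` for
`b = (da)♯d`, and `b ∈ dS` because `(da)♯` can be moved past the `da` that `d` starts with. -/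

theorem rle.mul_mul_eq_of_mul_mul_eq {x y g : S} (hyx : rle y x) (hg : x * g * x = x) :
    x * g * y = y := by
  rcases hyx with rfl | ⟨s, rfl⟩
  · exact hg
  · rw [← mul_assoc, hg]

theorem rle.exists_mul_eq_mul_of_commute {x a y g : S} (hy : rle y (x * a))
    (hg : Commute (x * a) g) : ∃ s, g * y = x * s := by
  rcases hy with rfl | ⟨s, rfl⟩
  · exact ⟨a * g, by rw [← hg.eq, mul_assoc]⟩
  · exact ⟨a * g * s, by rw [← mul_assoc, ← hg.eq, mul_assoc x, mul_assoc]⟩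

theorem stmt10_general (a d h : S) (hR : rrel (d * a) d)
    (hsharp : (d * a) * h * (d * a) = d * a ∧ h * (d * a) * h = h ∧ (d * a) * h = h * (d * a)) :
    invAlong a d (h * d) := by
  obtain ⟨hinner, -, hcomm⟩ := hsharp
  have hfix : d * a * h * d = d := hR.2.mul_mul_eq_of_mul_mul_eq hinner
  refine ⟨?_, ?_, hR.2.exists_mul_eq_mul_of_commute hcomm, ⟨h, rfl⟩⟩
  · calc h * d * a * d = h * (d * a) * d := by rw [mul_assoc h]
      _ = d := by rw [← hcomm, hfix]
  · rw [← mul_assoc, hfix]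

theorem stmt10 (a d h : S) (hR : rrel (d * a) d) (hG : isGroupSet (hClass (d * a)))
    (hsharp : (d * a) * h * (d * a) = d * a ∧ h * (d * a) * h = h ∧ (d * a) * h = h * (d * a)) :
    invAlong a d (h * d) :=
  stmt10_general a d h hR hsharp
end

section
/- Let S be a semigroup and a, d ∈ S. If a is invertible along d with inverse b, then its inverse satisfies b = d(ad)^♯ = (da)^♯ d, where (ad)^♯ and (da)^♯ are the group inverses of ad and da in their (group) H-classes. -/
variable {S : Type*} [Semigroup S]

/-!
From `b * a * d = d` and `(a * d) * h * (a * d) = a * d` one gets `d * h * (a * d) = d`; since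
`b ∈ S * d`, this gives `b = b * h * (a * d) = b * (a * d) * h = d * h`. The formula `b = k * d` is
the same argument in the opposite semigroup, where `d * a` becomes `a' * d'`.
-/

open MulOpposite

theorem invAlong.mulOpposite {a d b : S} (hb : invAlong a d b) : invAlong (op a) (op d) (op b) := by
  obtain ⟨hbad, hdab, ⟨s, hs⟩, ⟨t, ht⟩⟩ := hb
  refine ⟨?_, ?_, ⟨op t, ?_⟩, ⟨op s, ?_⟩⟩
  · simpa only [← op_mul, mul_assoc] using congrArg op hdab
  · simpa only [← op_mul, mul_assoc] using congrArg op hbad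
  · rw [ht, op_mul]
  · rw [hs, op_mul]

theorem invAlong.eq_mul_of_inner_inverse {a d b h : S} (hb : invAlong a d b)
    (hinner : a * d * h * (a * d) = a * d) (hcomm : Commute (a * d) h) : b = d * h := by
  obtain ⟨hbad, -, -, ⟨t, ht⟩⟩ := hb
  have hbad' : b * (a * d) = d := by rw [← mul_assoc, hbad]
  have hd : d * h * (a * d) = d :=
    calc d * h * (a * d) = b * (a * d) * h * (a * d) := by rw [hbad']
      _ = b * (a * d * h * (a * d)) := by simp only [mul_assoc]
      _ = d := by rw [hinner, hbad']
  calc b = t * (d * h * (a * d)) := by rw [hd, ht]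
    _ = b * (a * d * h) := by rw [ht, hcomm.eq]; simp only [mul_assoc]
    _ = b * (a * d) * h := (mul_assoc _ _ _).symm
    _ = d * h := by rw [hbad']

theorem invAlong.eq_mul_of_inner_inverse' {a d b k : S} (hb : invAlong a d b)
    (hinner : d * a * k * (d * a) = d * a) (hcomm : Commute (d * a) k) : b = k * d := by
  have hinner' : op a * op d * op k * (op a * op d) = op a * op d := by
    simpa only [← op_mul, mul_assoc] using congrArg op hinner
  have hcomm' : Commute (op a * op d) (op k) := by
    simpa only [op_mul] using hcomm.op
  simpa only [← op_mul, op_inj] using hb.mulOpposite.eq_mul_of_inner_inverse hinner' hcomm'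

theorem stmt11 (a d b h k : S) (hb : invAlong a d b)
    (hh : (a * d) * h * (a * d) = a * d ∧ h * (a * d) * h = h ∧ (a * d) * h = h * (a * d))
    (hk : (d * a) * k * (d * a) = d * a ∧ k * (d * a) * k = k ∧ (d * a) * k = k * (d * a)) :
    b = d * h ∧ b = k * d :=
  ⟨hb.eq_mul_of_inner_inverse hh.1 hh.2.2, hb.eq_mul_of_inner_inverse' hk.1 hk.2.2⟩
end

section
/- Let S be a semigroup, a, d ∈ S, and suppose b is the inverse of a along d (bad = d = dab, b ∈ dS ∩ Sd). Then b lies in the bicommutant of {a, d}: every c ∈ S commuting with both a and d also commutes with b. -/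
variable {S : Type*} [Semigroup S]

/-! `ba` is a left identity on `dS` and `ab` a right identity on `Sd`. If `c` commutes with `a`
and `d`, then `cb ∈ dS` and `bc ∈ Sd`, so `cb = b(ac)b` and `bc = b(ca)b`. -/

theorem mul_mul_eq_self_of_mem_left {a b d x : S} (hbad : b * a * d = d) (hx : ∃ s, x = d * s) :
    b * a * x = x := by
  obtain ⟨s, rfl⟩ := hx
  rw [← mul_assoc, hbad]

theorem mul_mul_eq_self_of_mem_right {a b d x : S} (hdab : d * a * b = d) (hx : ∃ t, x = t * d) :
    x * (a * b) = x := by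
  obtain ⟨t, rfl⟩ := hx
  rw [mul_assoc, ← mul_assoc d, hdab]

theorem stmt12 (a d b : S) (hb : invAlong a d b) :
    ∀ c, c * a = a * c → c * d = d * c → c * b = b * c := by
  obtain ⟨hbad, hdab, ⟨s, hbs⟩, ⟨t, hbt⟩⟩ := hb
  intro c hca hcd
  have hcb : b * a * (c * b) = c * b :=
    mul_mul_eq_self_of_mem_left hbad ⟨c * s, by rw [hbs, ← mul_assoc, hcd, mul_assoc]⟩
  have hbc : b * c * (a * b) = b * c :=
    mul_mul_eq_self_of_mem_right hdab ⟨t * c, by rw [hbt, mul_assoc t, ← hcd, mul_assoc]⟩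
  calc c * b = b * a * (c * b) := hcb.symm
    _ = b * (a * c) * b := by simp only [mul_assoc]
    _ = b * c * (a * b) := by rw [← hca]; simp only [mul_assoc]
    _ = b * c := hbc
end

section
/- Let S be a semigroup and a ∈ S. Then a has a group inverse (an element b with aba = a, bab = b, ab = ba) if and only if a is invertible along a itself, and in that case the inverse along a equals the group inverse and is inner. -/
variable {S : Type*} [Semigroup S]

def IsGroupInverse (a b : S) : Prop :=
  a * b * a = a ∧ b * a * b = b ∧ a * b = b * a

section

variable {a b : S}

theorem IsGroupInverse.invAlong_self (h : IsGroupInverse a b) : invAlong a a b := by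
  obtain ⟨haba, hbab, hcomm⟩ := h
  refine ⟨by rw [← hcomm, haba], by rw [mul_assoc, hcomm, ← mul_assoc, haba], ⟨b * b, ?_⟩, ⟨b * b, ?_⟩⟩
  · calc b = b * a * b := hbab.symm
      _ = a * (b * b) := by rw [← hcomm, mul_assoc]
  · calc b = b * a * b := hbab.symm
      _ = b * b * a := by rw [mul_assoc, hcomm, ← mul_assoc]

theorem mul_comm_of_invAlong_self (h : invAlong a a b) : a * b = b * a :=
  calc a * b = b * a * a * b := by rw [h.1]
    _ = b * (a * a * b) := by simp only [mul_assoc]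
    _ = b * a := by rw [h.2.1]

theorem isGroupInverse_of_invAlong_self (h : invAlong a a b) : IsGroupInverse a b := by
  have hcomm := mul_comm_of_invAlong_self h
  obtain ⟨hbaa, -, ⟨s, hs⟩, -⟩ := h
  refine ⟨by rw [hcomm, hbaa], ?_, hcomm⟩
  calc b * a * b = b * a * (a * s) := by rw [← hs]
    _ = b * a * a * s := by simp only [mul_assoc]
    _ = b := by rw [hbaa, hs]

end

theorem stmt13 (a : S) :
    ((∃ b, a * b * a = a ∧ b * a * b = b ∧ a * b = b * a) ↔ (∃ b, invAlong a a b)) ∧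
    (∀ b, invAlong a a b → (a * b * a = a ∧ b * a * b = b ∧ a * b = b * a)) :=
  ⟨⟨fun ⟨b, hb⟩ => ⟨b, IsGroupInverse.invAlong_self hb⟩,
    fun ⟨b, hb⟩ => ⟨b, isGroupInverse_of_invAlong_self hb⟩⟩,
    fun _ => isGroupInverse_of_invAlong_self⟩
end

section
/- Let R be a ring with involution * and a ∈ R. If a has both a Moore-Penrose inverse a⁺ and a group inverse a^♯ and a⁺ = a^♯, then aR = a*R. -/
/-! A Moore–Penrose inverse `b` of `a` gives `aR = (ab)R` and `a*R = (ba)R`; when `b` is also the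
group inverse, `ab = ba`, so the two right ideals coincide. Membership `x ∈ aR` is left
divisibility `a ∣ x`. -/

section Semigroup

variable {R : Type*} [Semigroup R]

theorem mul_dvd_of_mul_mul_eq_self {a b : R} (h : a * b * a = a) : a * b ∣ a :=
  ⟨a, h.symm⟩

variable [StarMul R]

theorem star_dvd_mul_of_star_mul_eq {a b : R} (h : star (b * a) = b * a) : star a ∣ b * a :=
  ⟨star b, by rw [← h, star_mul]⟩

theorem mul_dvd_star_of_mul_mul_eq_self {a b : R} (hab : a * b * a = a)
    (h : star (b * a) = b * a) : b * a ∣ star a :=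
  ⟨star a, by rw [← h, ← star_mul, ← mul_assoc, hab]⟩

end Semigroup

theorem stmt19 {R : Type*} [Ring R] [StarRing R] (a b c : R)
    (hMP : a * b * a = a ∧ b * a * b = b ∧ star (a * b) = a * b ∧ star (b * a) = b * a)
    (hGI : a * c * a = a ∧ c * a * c = c ∧ a * c = c * a)
    (heq : b = c) :
    {x : R | ∃ r, x = a * r} = {x : R | ∃ r, x = star a * r} := by
  obtain ⟨hab, -, -, hba⟩ := hMP
  have hcomm : a * b = b * a := heq ▸ hGI.2.2
  have ha : a ∣ star a :=
    (dvd_mul_right a b).trans (hcomm ▸ mul_dvd_star_of_mul_mul_eq_self hab hba)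
  have hs : star a ∣ a :=
    (star_dvd_mul_of_star_mul_eq hba).trans (hcomm ▸ mul_dvd_of_mul_mul_eq_self hab)
  ext x
  exact ⟨hs.trans, ha.trans⟩
end
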